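/- For d even with d/2 odd, and n ≥ d+3, the stabilizer C_n^d of positive (d+1)×n matrices under column permutation is the cyclic group ℤ/n generated by the rotation i ↦ i+1 (mod n). -/

import Mathlib

/-!
Testing a column permutation `σ` on the moment curve, whose maximal minors are Vandermonde
products, shows that `σ` preserves positivity iff every `d + 1` columns contain an even number
of inversions of `σ`: a single positive configuration already forces the permutation that sorts
any `d + 1` permuted columns to be even.

Let `E x y ∈ ZMod 2` indicate whether `σ` inverts `x` and `y`. Two `(d+1)`-sets differing in one
element (there is room since `n ≥ d + 3`) give the four-point relation
`E w y - E x y = E w z - E x z`, whence `E x y = f x + f y + c`. Summing over a `(d+1)`-set gives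
`C(d+1, 2) c = 0`, and `C(d+1, 2)` is odd as `d ≡ 2 mod 4`. So `c = 0`: the inversion graph of `σ`
is a cut. Cut permutations form a subgroup containing the rotation, and one fixing `0` has no
inversions, so the subgroup is generated by the rotation. Conversely, for even `d` a cut has an
even number of edges inside every `(d+1)`-set.
-/

noncomputable section

/-- The `(d+1)×(d+1)` matrix whose `j`-th column is `(1, cols j)`. -/
def liftMat {d : ℕ} (cols : Fin (d + 1) → Fin d → ℝ) : Matrix (Fin (d + 1)) (Fin (d + 1)) ℝ :=
  Matrix.of fun i j => Fin.cases (motive := fun _ => ℝ) 1 (fun r => cols j r) i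

/-- The `(d+1) × n` matrix with columns `(1, x i)` is positive: all maximal minors
(columns taken in increasing order) are positive. -/
def PosMat {d n : ℕ} (x : Fin n → Fin d → ℝ) : Prop :=
  ∀ S : Fin (d + 1) → Fin n, StrictMono S → 0 < (liftMat fun k => x (S k)).det

/-- `F` is a face of `P`: the set of maximizers in `P` of some linear functional. -/
def IsFace {d : ℕ} (P F : Set (Fin d → ℝ)) : Prop :=
  ∃ f : (Fin d → ℝ) →ₗ[ℝ] ℝ, ∃ c : ℝ,
    (∀ y ∈ P, f y ≤ c) ∧ F = {y ∈ P | f y = c}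

/-- `F` is a facet of the `d`-dimensional polytope `P`: a face of dimension `d − 1`. -/
def IsFacet {d : ℕ} (P F : Set (Fin d → ℝ)) : Prop :=
  IsFace P F ∧ Module.finrank ℝ (vectorSpan ℝ F) = d - 1

open Finset Equiv

section

variable {α : Type*} [LinearOrder α]

def pairSum {M : Type*} [AddCommMonoid M] (E : α → α → M) (A : Finset α) : M :=
  ∑ x ∈ A, ∑ y ∈ A with x < y, E x y

lemma pairSum_map {β M : Type*} [LinearOrder β] [AddCommMonoid M] (e : β ↪o α)
    (E : α → α → M) (s : Finset β) :
    pairSum E (s.map e.toEmbedding) = pairSum (fun x y => E (e x) (e y)) s := by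
  simp [pairSum, filter_map]

lemma pairSum_insert {M : Type*} [AddCommMonoid M] {E : α → α → M}
    (hE : ∀ x y, E x y = E y x) {a : α} {A : Finset α} (ha : a ∉ A) :
    pairSum E (insert a A) = pairSum E A + ∑ y ∈ A, E a y := by
  have hlt : ∀ x ∈ A, (x < a ↔ ¬ a < x) := fun x hx =>
    ⟨fun h => h.not_gt, fun h => (not_lt.1 h).lt_of_ne (ne_of_mem_of_not_mem hx ha)⟩
  have hrow : ∀ x ∈ A, ∑ y ∈ insert a A with x < y, E x y
      = (if x < a then E a x else 0) + ∑ y ∈ A with x < y, E x y := by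
    intro x hx
    rw [filter_insert]
    split_ifs with h
    · rw [sum_insert fun h' => ha (mem_filter.1 h').1, hE]
    · rw [zero_add]
  rw [pairSum, pairSum, sum_insert ha, filter_insert, if_neg (lt_irrefl a), sum_congr rfl hrow,
    sum_add_distrib, ← sum_filter, filter_congr hlt,
    ← sum_filter_add_sum_filter_not A (a < ·) (E a)]
  abel

lemma pairSum_eq_of_cut {R : Type*} [CommRing R] {E : α → α → R} {f : α → R} {c : R}
    (hE : ∀ x y, x ≠ y → E x y = f x + f y + c) (A : Finset α) :
    pairSum E A = ((#A : R) - 1) * ∑ x ∈ A, f x + ((#A).choose 2 : ℕ) * c := by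
  have hsymm : ∀ x y, E x y = E y x := by
    intro x y
    rcases eq_or_ne x y with rfl | h
    · rfl
    · rw [hE x y h, hE y x h.symm, add_comm (f x)]
  induction A using Finset.induction_on with
  | empty => simp [pairSum]
  | insert a A ha ih =>
    have hrow : ∀ y ∈ A, E a y = f a + f y + c :=
      fun y hy => hE a y (ne_of_mem_of_not_mem hy ha).symm
    rw [pairSum_insert hsymm ha, ih, sum_congr rfl hrow, card_insert_of_notMem ha, sum_insert ha,
      Nat.choose_succ_succ', Nat.choose_one_right, sum_add_distrib, sum_add_distrib, sum_const,
      sum_const, nsmul_eq_mul, nsmul_eq_mul]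
    push_cast
    ring

lemma sub_eq_sub_of_pairSum_eq_zero [Fintype α] {M : Type*} [AddCommGroup M] {E : α → α → M}
    {k : ℕ} (hcard : k + 4 ≤ Fintype.card α) (hE : ∀ x y, E x y = E y x)
    (hQ : ∀ A : Finset α, #A = k + 2 → pairSum E A = 0)
    {w x y z : α} (hwy : w ≠ y) (hwz : w ≠ z) (hxy : x ≠ y) (hxz : x ≠ z) :
    E w y - E x y = E w z - E x z := by
  classical
  have hrow : ∀ B : Finset α, #B = k + 1 → ∀ a ∉ B, ∑ b ∈ B, E a b = -pairSum E B := by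
    intro B hB a ha
    rw [eq_neg_iff_add_eq_zero, add_comm, ← pairSum_insert hE ha,
      hQ _ (by rw [card_insert_of_notMem ha, hB])]
  obtain ⟨U, hU, hUcard⟩ := exists_subset_card_eq (s := ({w, x, y, z} : Finset α)ᶜ) (n := k)
    (by rw [card_compl]; have := card_le_four (a := w) (b := x) (c := y) (d := z); omega)
  simp only [subset_iff, mem_compl, mem_insert, mem_singleton, not_or] at hU
  have hwU : w ∉ U := fun h => (hU h).1 rfl
  have hxU : x ∉ U := fun h => (hU h).2.1 rfl
  have hyU : y ∉ U := fun h => (hU h).2.2.1 rfl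
  have hzU : z ∉ U := fun h => (hU h).2.2.2 rfl
  have hyU' : #(insert y U) = k + 1 := by rw [card_insert_of_notMem hyU, hUcard]
  have hzU' : #(insert z U) = k + 1 := by rw [card_insert_of_notMem hzU, hUcard]
  have h1 := hrow _ hyU' w (by simp [hwy, hwU])
  have h2 := hrow _ hyU' x (by simp [hxy, hxU])
  have h3 := hrow _ hzU' w (by simp [hwz, hwU])
  have h4 := hrow _ hzU' x (by simp [hxz, hxU])
  rw [sum_insert hyU] at h1 h2
  rw [sum_insert hzU] at h3 h4
  linear_combination (norm := module) h1 - h2 - h3 + h4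

variable {β : Type*} [LinearOrder β]

def invParity (g : α → β) (x y : α) : ZMod 2 :=
  if (x < y ↔ g x < g y) then 0 else 1

lemma invParity_symm {g : α → β} (hg : Function.Injective g) (x y : α) :
    invParity g x y = invParity g y x := by
  have := hg.eq_iff (a := x) (b := y)
  unfold invParity
  grind

lemma invParity_comp {γ : Type*} [LinearOrder γ] (g : β → γ) (h : α → β) (x y : α) :
    invParity (g ∘ h) x y = invParity h x y + invParity g (h x) (h y) := by
  unfold invParity
  simp only [Function.comp_apply]
  split_ifs <;> first | decide | tauto

lemma invParity_comp_strictMono {γ : Type*} [LinearOrder γ] (g : β → γ) {h : α → β}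
    (hh : StrictMono h) : invParity (g ∘ h) = fun x y => invParity g (h x) (h y) := by
  ext x y
  simp only [invParity, Function.comp_apply, hh.lt_iff_lt]

lemma invParity_strictMono_comp {γ : Type*} [LinearOrder γ] {g : β → γ} (hg : StrictMono g)
    (h : α → β) : invParity (g ∘ h) = invParity h := by
  ext x y
  simp only [invParity, Function.comp_apply, hg.lt_iff_lt]

end

lemma exists_cut_of_sub_eq_sub {ι M : Type*} [Fintype ι] [AddCommGroup M] {E : ι → ι → M}
    (hcard : 2 < Fintype.card ι) (hE : ∀ x y, E x y = E y x)
    (h4 : ∀ w x y z, w ≠ y → w ≠ z → x ≠ y → x ≠ z →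
      E w y - E x y = E w z - E x z) :
    ∃ f : ι → M, ∃ c : M, ∀ x y, x ≠ y → E x y = f x + f y + c := by
  classical
  obtain ⟨o, p, q, hop, hoq, hpq⟩ := Fintype.two_lt_card_iff.1 hcard
  obtain ⟨c, hc⟩ : ∃ c, c = E p q - E p o - E q o := ⟨_, rfl⟩
  have hq : ∀ x, x ≠ o → x ≠ q → E x q - E x o - E q o = c := fun x hxo hxq => by
    linear_combination (norm := module) h4 x p q o hxq hxo hpq hop.symm - hc
  have hD : ∀ x y, x ≠ y → x ≠ o → y ≠ o → E x y - E x o - E y o = c := by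
    intro x y hxy hxo hyo
    obtain rfl | hyq := eq_or_ne y q
    · exact hq x hxo hxy
    obtain rfl | hxq := eq_or_ne x q
    · linear_combination (norm := module) hq y hyo hyq + hE x y
    linear_combination (norm := module)
      hq x hxo hxq + hE x y - hE x q + h4 y q x o hxy.symm hyo hxq.symm hoq.symm
  -- the value `-c` at `o` makes the pairs through `o` fit as well
  refine ⟨fun x => if x = o then -c else E x o, c, fun x y hxy => ?_⟩
  dsimp only
  obtain rfl | hx := eq_or_ne x o
  · rw [if_pos rfl, if_neg hxy.symm, hE]
    abel
  obtain rfl | hy := eq_or_ne y o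
  · rw [if_neg hx, if_pos rfl]
    abel
  rw [if_neg hx, if_neg hy]
  linear_combination (norm := module) hD x y hxy hx hy

section

variable {R : Type*} [CommRing R] [LinearOrder R] [IsStrictOrderedRing R]

lemma ite_prod_neg_eq_sum_ite_neg {ι : Type*} (s : Finset ι) {f : ι → R}
    (hf : ∀ i ∈ s, f i ≠ 0) :
    (if ∏ i ∈ s, f i < 0 then 1 else 0 : ZMod 2) = ∑ i ∈ s, if f i < 0 then 1 else 0 := by
  classical
  induction s using Finset.induction_on with
  | empty => simp [zero_le_one.not_gt]
  | insert a s ha ih =>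
    rw [prod_insert ha, sum_insert ha, ← ih fun i hi => hf i (mem_insert_of_mem hi)]
    have hP : ∏ i ∈ s, f i ≠ 0 := prod_ne_zero_iff.2 fun i hi => hf i (mem_insert_of_mem hi)
    rcases (hf a (mem_insert_self a s)).lt_or_gt with h1 | h1 <;>
      rcases hP.lt_or_gt with h2 | h2 <;>
      simp [mul_neg_iff, h1, h2, h1.not_gt, h2.not_gt, CharTwo.add_self_eq_zero]

lemma prod_Ioi_sub_pos_iff {m : ℕ} {t : Fin m → R} (ht : Function.Injective t) :
    0 < ∏ k, ∏ l ∈ Ioi k, (t l - t k) ↔ pairSum (invParity t) univ = 0 := by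
  have hne : ∀ k, ∀ l ∈ Ioi k, t l - t k ≠ 0 := fun k l hl =>
    sub_ne_zero.2 (ht.ne (mem_Ioi.1 hl).ne')
  have hP : ∏ k, ∏ l ∈ Ioi k, (t l - t k) ≠ 0 :=
    prod_ne_zero_iff.2 fun k _ => prod_ne_zero_iff.2 (hne k)
  have key : (if ∏ k, ∏ l ∈ Ioi k, (t l - t k) < 0 then 1 else 0 : ZMod 2)
      = pairSum (invParity t) univ := by
    rw [ite_prod_neg_eq_sum_ite_neg _ fun k _ => prod_ne_zero_iff.2 (hne k)]
    refine sum_congr rfl fun k _ => ?_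
    rw [ite_prod_neg_eq_sum_ite_neg _ (hne k), filter_lt_eq_Ioi]
    refine sum_congr rfl fun l hl => ?_
    have hkl := mem_Ioi.1 hl
    simp only [invParity, hkl, true_iff, sub_neg]
    rcases (ht.ne hkl.ne).lt_or_gt with h | h <;> simp [h, h.not_gt]
  rw [← key]
  rcases hP.lt_or_gt with h | h <;> simp [h, h.not_gt]

end

def momentCurve (d : ℕ) (t : ℝ) : Fin d → ℝ := fun r => t ^ ((r : ℕ) + 1)

lemma det_liftMat_momentCurve {d : ℕ} (t : Fin (d + 1) → ℝ) :
    (liftMat fun k => momentCurve d (t k)).det = ∏ k, ∏ l ∈ Ioi k, (t l - t k) := by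
  have : (liftMat fun k => momentCurve d (t k)) = (Matrix.vandermonde t).transpose := by
    ext i j
    refine Fin.cases ?_ (fun r => ?_) i <;> simp [liftMat, momentCurve, Matrix.vandermonde]
  rw [this, Matrix.det_transpose, Matrix.det_vandermonde]

lemma posMat_momentCurve {d n : ℕ} {t : Fin n → ℝ} (ht : StrictMono t) :
    PosMat fun i => momentCurve d (t i) := fun S hS => by
  rw [det_liftMat_momentCurve]
  exact prod_pos fun k _ => prod_pos fun l hl => sub_pos.2 (ht (hS (mem_Ioi.1 hl)))

lemma posMat_momentCurve_iff {d n : ℕ} {t : Fin n → ℝ} (ht : Function.Injective t) :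
    (PosMat fun i => momentCurve d (t i)) ↔
      ∀ A : Finset (Fin n), #A = d + 1 → pairSum (invParity t) A = 0 := by
  have key : ∀ S : Fin (d + 1) ↪o Fin n, 0 < (liftMat fun k => momentCurve d (t (S k))).det ↔
      pairSum (invParity t) (univ.map S.toEmbedding) = 0 := fun S => by
    rw [det_liftMat_momentCurve, pairSum_map, ← invParity_comp_strictMono t S.strictMono]
    exact prod_Ioi_sub_pos_iff (ht.comp S.injective)
  constructor
  · intro h A hA
    rw [← map_orderEmbOfFin_univ A hA, ← key]
    exact h _ (A.orderEmbOfFin hA).strictMono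
  · intro h S hS
    exact (key (OrderEmbedding.ofStrictMono S hS)).2 (h _ (by simp))

lemma posMat_comp_iff {d n : ℕ} {x₀ : Fin n → Fin d → ℝ} (h₀ : PosMat x₀)
    (σ : Perm (Fin n)) :
    (∀ x : Fin n → Fin d → ℝ, PosMat x → PosMat fun i => x (σ i)) ↔
      PosMat fun i => x₀ (σ i) := by
  refine ⟨fun h => h x₀ h₀, fun hσ x hx S hS => ?_⟩
  set π := Tuple.sort (σ ∘ S)
  have hπ : StrictMono (σ ∘ S ∘ π) := (Tuple.monotone_sort _).strictMono_of_injective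
    ((σ.injective.comp hS.injective).comp π.injective)
  have hdet : ∀ y : Fin n → Fin d → ℝ, (liftMat fun k => y (σ (S (π k)))).det
      = (Perm.sign π : ℝ) * (liftMat fun k => y (σ (S k))).det :=
    fun y => Matrix.det_permute' π (liftMat fun k => y (σ (S k)))
  have hsign : (Perm.sign π : ℝ) = 1 := by
    have hpos : 0 < (Perm.sign π : ℝ) * (liftMat fun k => x₀ (σ (S k))).det := by
      rw [← hdet]
      exact h₀ _ hπ
    rcases Int.units_eq_one_or (Perm.sign π) with h | h
    · simp [h]
    · rw [h] at hpos
      push_cast at hpos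
      linarith [hσ S hS]
  rw [← one_mul (liftMat _).det, ← hsign, ← hdet]
  exact hx _ hπ

lemma preservesPos_iff_pairSum_invParity {d n : ℕ} (σ : Perm (Fin n)) :
    (∀ x : Fin n → Fin d → ℝ, PosMat x → PosMat fun i => x (σ i)) ↔
      ∀ A : Finset (Fin n), #A = d + 1 → pairSum (invParity σ) A = 0 := by
  have hcast : StrictMono fun i : Fin n => (i : ℝ) := Nat.strictMono_cast.comp Fin.val_strictMono
  rw [posMat_comp_iff (posMat_momentCurve hcast), ← invParity_strictMono_comp hcast σ]
  exact posMat_momentCurve_iff (hcast.injective.comp σ.injective)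

-- `σ` inverts `x` and `y` iff they lie on different sides of the cut `f`.
def cutSubgroup (α : Type*) [LinearOrder α] : Subgroup (Perm α) where
  carrier := {σ | ∃ f : α → ZMod 2, ∀ x y, invParity σ x y = f x + f y}
  one_mem' := ⟨0, fun x y => by simp [invParity]⟩
  mul_mem' := by
    rintro σ τ ⟨f, hf⟩ ⟨g, hg⟩
    refine ⟨fun x => g x + f (τ x), fun x y => ?_⟩
    rw [Perm.coe_mul, invParity_comp, hf, hg]
    ring
  inv_mem' := by
    rintro σ ⟨f, hf⟩
    refine ⟨fun x => f (σ⁻¹ x), fun x y => ?_⟩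
    have h := invParity_comp σ (⇑σ⁻¹) x y
    have hid : invParity (id : α → α) x y = 0 := by simp [invParity]
    rw [← Perm.coe_mul, mul_inv_cancel, Perm.coe_one, hid, hf] at h
    exact CharTwo.add_eq_zero.1 h.symm

lemma eq_one_of_mem_cutSubgroup {α : Type*} [LinearOrder α] [Finite α] [OrderBot α]
    {τ : Perm α} (hτ : τ ∈ cutSubgroup α) (hbot : τ ⊥ = ⊥) : τ = 1 := by
  obtain ⟨f, hf⟩ := hτ
  have hconst : ∀ y, f y = f ⊥ := fun y => by
    obtain rfl | hy := eq_or_ne y ⊥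
    · rfl
    have hτy : τ ⊥ < τ y := by
      rw [hbot]
      exact bot_lt_iff_ne_bot.2 fun h => hy (τ.injective (h.trans hbot.symm))
    have h := hf ⊥ y
    rw [invParity, if_pos (iff_of_true (bot_lt_iff_ne_bot.2 hy) hτy)] at h
    exact (CharTwo.add_eq_zero.1 h.symm).symm
  have hmono : StrictMono τ := fun x y hxy => by
    have h := hf x y
    rw [hconst x, hconst y, CharTwo.add_self_eq_zero, invParity] at h
    split_ifs at h with hiff
    · exact hiff.1 hxy
    · exact absurd h one_ne_zero
  exact Equiv.ext fun x => congrFun hmono.eq_id x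

lemma finRotate_mem_cutSubgroup (m : ℕ) : finRotate (m + 1) ∈ cutSubgroup (Fin (m + 1)) := by
  refine ⟨fun x => if x = Fin.last m then 1 else 0, fun x y => ?_⟩
  have hx := Fin.le_last x
  have hy := Fin.le_last y
  simp only [invParity, Fin.lt_def, coe_finRotate, Fin.le_def, Fin.val_last, Fin.ext_iff] at *
  split_ifs <;> first | decide | omega

lemma finRotate_pow_val_apply_zero {m : ℕ} (i : Fin (m + 1)) :
    (finRotate (m + 1) ^ (i : ℕ)) 0 = i := by
  induction i using Fin.induction with
  | zero => rfl
  | succ i ih =>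
    rw [Fin.val_castSucc] at ih
    rw [Fin.val_succ, pow_succ', Perm.mul_apply, ih, finRotate_apply, Fin.coeSucc_eq_succ]

lemma cutSubgroup_eq_zpowers (m : ℕ) :
    cutSubgroup (Fin (m + 1)) = Subgroup.zpowers (finRotate (m + 1)) := by
  refine le_antisymm (fun σ hσ => ?_) (Subgroup.zpowers_le.2 (finRotate_mem_cutSubgroup m))
  set ρ := finRotate (m + 1) ^ ((σ⁻¹ 0 : Fin (m + 1)) : ℕ)
  have hρ : ρ ∈ cutSubgroup (Fin (m + 1)) := pow_mem (finRotate_mem_cutSubgroup m) _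
  have h1 : σ * ρ = 1 := eq_one_of_mem_cutSubgroup (mul_mem hσ hρ) (by
    rw [Perm.mul_apply, bot_eq_zero, finRotate_pow_val_apply_zero]; simp)
  rw [eq_inv_of_mul_eq_one_left h1]
  exact inv_mem (Subgroup.npow_mem_zpowers _ _)

lemma odd_choose_two_of_odd_half {d : ℕ} (hd : Even d) (hd2 : Odd (d / 2)) :
    Odd ((d + 1).choose 2) := by
  rw [Nat.choose_two_right, Nat.add_sub_cancel, Nat.mul_div_assoc _ (even_iff_two_dvd.1 hd)]
  exact Nat.odd_mul.2 ⟨hd.add_one, hd2⟩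

lemma mem_cutSubgroup_of_pairSum_eq_zero {α : Type*} [LinearOrder α] [Fintype α] {d : ℕ}
    (hd : Even d) (hd2 : Odd (d / 2)) (hcard : d + 3 ≤ Fintype.card α) {σ : Perm α}
    (hσ : ∀ A : Finset α, #A = d + 1 → pairSum (invParity σ) A = 0) :
    σ ∈ cutSubgroup α := by
  obtain ⟨k, rfl⟩ : ∃ k, d = k + 1 := ⟨d - 1, by obtain ⟨t, ht⟩ := hd2; omega⟩
  have hsymm := invParity_symm σ.injective
  obtain ⟨f, c, hfc⟩ := exists_cut_of_sub_eq_sub (by omega) hsymm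
    fun w x y z => sub_eq_sub_of_pairSum_eq_zero (by omega) hsymm hσ
  obtain ⟨A, -, hA⟩ := exists_subset_card_eq (s := (univ : Finset α)) (n := k + 1 + 1)
    (by rw [card_univ]; omega)
  have hc : c = 0 := by
    have h := pairSum_eq_of_cut hfc A
    have hA' : ((#A : ℕ) : ZMod 2) - 1 = 0 := by
      rw [hA, ← hd.natCast_zmod_two]
      push_cast
      ring
    rw [hσ A hA, hA', hA, (odd_choose_two_of_odd_half hd hd2).natCast_zmod_two] at h
    linear_combination -h
  refine ⟨f, fun x y => ?_⟩
  obtain rfl | hxy := eq_or_ne x y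
  · simp [invParity, CharTwo.add_self_eq_zero]
  · rw [hfc x y hxy, hc, add_zero]

lemma pairSum_eq_zero_of_mem_cutSubgroup {α : Type*} [LinearOrder α] {d : ℕ} (hd : Even d)
    {σ : Perm α} (hσ : σ ∈ cutSubgroup α) {A : Finset α} (hA : #A = d + 1) :
    pairSum (invParity σ) A = 0 := by
  obtain ⟨f, hf⟩ := hσ
  rw [pairSum_eq_of_cut (c := 0) (fun x y _ => by rw [hf, add_zero]), hA, Nat.cast_add,
    Nat.cast_one, add_sub_cancel_right, hd.natCast_zmod_two]
  simp

/-- for `d` even with `d/2` odd and `n ≥ d+3`, the stabilizer `C_n^d`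
of positive matrices under column permutation is the cyclic group `ℤ/n` generated by
the rotation `finRotate n`. -/
theorem stabilizer_even_d_odd_half_cyclic {d n : ℕ} (hd : Even d) (hd2 : Odd (d / 2))
    (hn : d + 3 ≤ n) :
    {σ : Equiv.Perm (Fin n) |
        ∀ x : Fin n → Fin d → ℝ, PosMat x → PosMat fun i => x (σ i)} =
      (Subgroup.zpowers (finRotate n) : Set (Equiv.Perm (Fin n))) := by
  obtain ⟨m, rfl⟩ : ∃ m, n = m + 1 := ⟨n - 1, by omega⟩
  ext σ
  rw [Set.mem_ofPred_eq, preservesPos_iff_pairSum_invParity, SetLike.mem_coe,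
    ← cutSubgroup_eq_zpowers]
  exact ⟨mem_cutSubgroup_of_pairSum_eq_zero hd hd2 (by rwa [Fintype.card_fin]),
    fun hσ _ hA => pairSum_eq_zero_of_mem_cutSubgroup hd hσ hA⟩
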